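/- Let Φ be a bijection between the sets of partial isometries of B(H) and B(K) that preserves the partial order in both directions and preserves orthogonality in both directions. Then Φ(0) = 0, and for any finite family e₁, ..., eₘ of mutually orthogonal partial isometries in B(H), Φ(e₁ + ... + eₘ) = Φ(e₁) + ... + Φ(eₘ). -/
import Mathlib


/-- A partial isometry in `B(H)`. -/
def IsPIso {H : Type*} [NormedAddCommGroup H] [InnerProductSpace ℂ H] [CompleteSpace H]
    (e : H →L[ℂ] H) : Prop :=
  e * ContinuousLinearMap.adjoint e * e = e

/-- The natural partial order on partial isometries. -/
def PIsoLE {H : Type*} [NormedAddCommGroup H] [InnerProductSpace ℂ H] [CompleteSpace H]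
    (e u : H →L[ℂ] H) : Prop :=
  IsPIso (u - e) ∧ ContinuousLinearMap.adjoint (u - e) * e = 0 ∧
    (u - e) * ContinuousLinearMap.adjoint e = 0

/-- Orthogonality of partial isometries. -/
def PIsoPerp {H : Type*} [NormedAddCommGroup H] [InnerProductSpace ℂ H] [CompleteSpace H]
    (e u : H →L[ℂ] H) : Prop :=
  ContinuousLinearMap.adjoint e * u = 0 ∧ e * ContinuousLinearMap.adjoint u = 0

section StarRingAux

variable {R : Type*} [Ring R] [StarRing R]

/-- Abstract partial isometry in a star ring. -/
def PI (e : R) : Prop := e * star e * e = e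

/-- Abstract order on partial isometries. -/
def PLE (e u : R) : Prop := PI (u - e) ∧ star (u - e) * e = 0 ∧ (u - e) * star e = 0

/-- Abstract orthogonality. -/
def PPerp (e u : R) : Prop := star e * u = 0 ∧ e * star u = 0

lemma PPerp.symm' {e u : R} (h : PPerp e u) : PPerp u e := by
  constructor
  · have := congrArg star h.1
    simpa [star_mul] using this
  · have := congrArg star h.2
    simpa [star_mul] using this

lemma perp_self_eq_zero {e : R} (hPI : PI e) (h : PPerp e e) : e = 0 := by
  calc e = e * star e * e := hPI.symm
    _ = e * (star e * e) := mul_assoc _ _ _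
    _ = 0 := by rw [h.1, mul_zero]

lemma PLE.antisymm' {a b : R} (h1 : PLE a b) (h2 : PLE b a) : a = b := by
  have hb : star (b - a) * b = 0 := by
    have h := h2.2.1
    rw [← neg_sub b a, star_neg, neg_mul] at h
    have := neg_eq_zero.mp h
    exact this
  have hd : star (b - a) * (b - a) = 0 := by
    rw [mul_sub, hb, h1.2.1, sub_zero]
  have hba := h1.1
  unfold PI at hba
  rw [mul_assoc, hd, mul_zero] at hba
  exact (sub_eq_zero.mp hba.symm).symm

lemma sum_mul_star_sum {ι : Type*} [DecidableEq ι] {s : Finset ι} {e : ι → R}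
    (hp : ∀ i ∈ s, ∀ j ∈ s, i ≠ j → PPerp (e i) (e j)) :
    (∑ i ∈ s, e i) * star (∑ i ∈ s, e i) = ∑ i ∈ s, e i * star (e i) := by
  rw [star_sum, Finset.sum_mul_sum]
  apply Finset.sum_congr rfl
  intro i hi
  exact Finset.sum_eq_single_of_mem i hi
    (fun j hj hne => (hp i hi j hj (Ne.symm hne)).2)

lemma star_sum_mul_sum {ι : Type*} [DecidableEq ι] {s : Finset ι} {e : ι → R}
    (hp : ∀ i ∈ s, ∀ j ∈ s, i ≠ j → PPerp (e i) (e j)) :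
    star (∑ i ∈ s, e i) * (∑ i ∈ s, e i) = ∑ i ∈ s, star (e i) * e i := by
  rw [star_sum, Finset.sum_mul_sum]
  apply Finset.sum_congr rfl
  intro i hi
  exact Finset.sum_eq_single_of_mem i hi
    (fun j hj hne => (hp i hi j hj (Ne.symm hne)).1)

lemma sum_PI {ι : Type*} [DecidableEq ι] {s : Finset ι} {e : ι → R}
    (h : ∀ i ∈ s, PI (e i)) (hp : ∀ i ∈ s, ∀ j ∈ s, i ≠ j → PPerp (e i) (e j)) :
    PI (∑ i ∈ s, e i) := by
  unfold PI
  rw [sum_mul_star_sum hp, Finset.sum_mul]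
  calc (∑ i ∈ s, e i * star (e i) * (∑ j ∈ s, e j)) = ∑ i ∈ s, e i := by
        apply Finset.sum_congr rfl
        intro i hi
        rw [Finset.mul_sum,
          Finset.sum_eq_single_of_mem i hi
            (fun j hj hne => by
              rw [mul_assoc, (hp i hi j hj (Ne.symm hne)).1, mul_zero])]
        exact h i hi

lemma PLE_add_of_perp {e w : R} (hw : PI w) (hperp : PPerp e w) : PLE e (e + w) := by
  refine ⟨by simpa using hw, ?_, ?_⟩
  · rw [add_sub_cancel_left]
    exact hperp.symm'.1
  · rw [add_sub_cancel_left]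
    exact hperp.symm'.2

lemma PLE_mem_sum {ι : Type*} [DecidableEq ι] {s : Finset ι} {e : ι → R}
    (h : ∀ i ∈ s, PI (e i)) (hp : ∀ i ∈ s, ∀ j ∈ s, i ≠ j → PPerp (e i) (e j))
    {i : ι} (hi : i ∈ s) : PLE (e i) (∑ j ∈ s, e j) := by
  rw [← Finset.add_sum_erase s e hi]
  apply PLE_add_of_perp
  · exact sum_PI (fun j hj => h j (Finset.mem_of_mem_erase hj))
      (fun a ha b hb hab =>
        hp a (Finset.mem_of_mem_erase ha) b (Finset.mem_of_mem_erase hb) hab)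
  · constructor
    · rw [Finset.mul_sum]
      apply Finset.sum_eq_zero
      intro j hj
      exact (hp i hi j (Finset.mem_of_mem_erase hj)
        (Ne.symm (Finset.ne_of_mem_erase hj))).1
    · rw [star_sum, Finset.mul_sum]
      apply Finset.sum_eq_zero
      intro j hj
      exact (hp i hi j (Finset.mem_of_mem_erase hj)
        (Ne.symm (Finset.ne_of_mem_erase hj))).2

lemma sum_PLE {ι : Type*} [DecidableEq ι] {s : Finset ι} {e : ι → R} {u : R}
    (hu : PI u) (h : ∀ i ∈ s, PI (e i))
    (hp : ∀ i ∈ s, ∀ j ∈ s, i ≠ j → PPerp (e i) (e j))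
    (hle : ∀ i ∈ s, PLE (e i) u) :
    PLE (∑ i ∈ s, e i) u := by
  set S := ∑ i ∈ s, e i with hS
  have hA : ∀ i ∈ s, star u * e i = star (e i) * e i := by
    intro i hi
    have := (hle i hi).2.1
    rw [star_sub, sub_mul] at this
    exact sub_eq_zero.mp this
  have hB : ∀ i ∈ s, u * star (e i) = e i * star (e i) := by
    intro i hi
    have := (hle i hi).2.2
    rw [sub_mul] at this
    exact sub_eq_zero.mp this
  have hC : ∀ i ∈ s, u * star u * e i = e i := by
    intro i hi
    rw [mul_assoc, hA i hi, ← mul_assoc, hB i hi]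
    exact h i hi
  have hSS : S * star S = ∑ i ∈ s, e i * star (e i) := sum_mul_star_sum hp
  have hSS' : star S * S = ∑ i ∈ s, star (e i) * e i := star_sum_mul_sum hp
  have hE : u * star S = S * star S := by
    rw [hSS, hS, star_sum, Finset.mul_sum]
    exact Finset.sum_congr rfl hB
  have hD : star u * S = star S * S := by
    rw [hSS', hS, Finset.mul_sum]
    exact Finset.sum_congr rfl hA
  have hE' : S * star u = S * star S := by
    have := congrArg star hE
    simpa [star_mul, star_star, mul_assoc] using this
  have hD' : star S * u = star S * S := by
    have := congrArg star hD
    simpa [star_mul, star_star, mul_assoc] using this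
  have hSPI : S * star S * S = S := sum_PI h hp
  have hCU : u * star u * S = S := by
    rw [hS, Finset.mul_sum]
    exact Finset.sum_congr rfl hC
  have hSSu : S * star S * u = S := by
    rw [mul_assoc, hD', ← mul_assoc, hSPI]
  have expand1 : (u - S) * star (u - S) = u * star u - S * star S := by
    rw [star_sub, mul_sub, sub_mul, sub_mul, hE, hE']
    abel
  have expand2 : (u * star u - S * star S) * (u - S) = u - S := by
    rw [sub_mul, mul_sub, mul_sub, hu, hCU, hSSu, hSPI]
    abel
  refine ⟨?_, ?_, ?_⟩
  · show (u - S) * star (u - S) * (u - S) = u - S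
    rw [expand1, expand2]
  · rw [star_sub, sub_mul, hD, sub_self]
  · rw [sub_mul, hE, sub_self]

end StarRingAux

section Bridge

variable {H : Type*} [NormedAddCommGroup H] [InnerProductSpace ℂ H] [CompleteSpace H]

lemma isPIso_iff (e : H →L[ℂ] H) : IsPIso e ↔ PI e := by
  simp [IsPIso, PI, ContinuousLinearMap.star_eq_adjoint]

lemma pisoLE_iff (e u : H →L[ℂ] H) : PIsoLE e u ↔ PLE e u := by
  simp [PIsoLE, PLE, IsPIso, PI, ContinuousLinearMap.star_eq_adjoint]

lemma pisoPerp_iff (e u : H →L[ℂ] H) : PIsoPerp e u ↔ PPerp e u := by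
  simp [PIsoPerp, PPerp, ContinuousLinearMap.star_eq_adjoint]

end Bridge

/-- A bijection between the sets of partial isometries preserving order and orthogonality
in both directions maps `0` to `0` and is additive on finite families of mutually
orthogonal partial isometries. -/
theorem stmt_8 {H K : Type*}
    [NormedAddCommGroup H] [InnerProductSpace ℂ H] [CompleteSpace H]
    [NormedAddCommGroup K] [InnerProductSpace ℂ K] [CompleteSpace K]
    (Φ : (H →L[ℂ] H) → (K →L[ℂ] K))
    (hbij : Set.BijOn Φ {e | IsPIso e} {v | IsPIso v})
    (horder : ∀ e u, IsPIso e → IsPIso u → (PIsoLE e u ↔ PIsoLE (Φ e) (Φ u)))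
    (hperp : ∀ e u, IsPIso e → IsPIso u → (PIsoPerp e u ↔ PIsoPerp (Φ e) (Φ u))) :
    Φ 0 = 0 ∧
    ∀ (m : ℕ) (e : Fin m → (H →L[ℂ] H)), (∀ i, IsPIso (e i)) →
      (∀ i j, i ≠ j → PIsoPerp (e i) (e j)) →
      Φ (∑ i, e i) = ∑ i, Φ (e i) := by
  constructor
  · have h0 : IsPIso (0 : H →L[ℂ] H) := by simp [IsPIso]
    have h0' : IsPIso (Φ 0) := hbij.mapsTo h0
    have hp : PIsoPerp (0 : H →L[ℂ] H) 0 := by simp [PIsoPerp]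
    have hq := (hperp 0 0 h0 h0).mp hp
    exact perp_self_eq_zero ((isPIso_iff _).mp h0') ((pisoPerp_iff _ _).mp hq)
  · intro m e he hpe
    have he' : ∀ i ∈ (Finset.univ : Finset (Fin m)), PI (e i) :=
      fun i _ => (isPIso_iff _).mp (he i)
    have hpe' : ∀ i ∈ (Finset.univ : Finset (Fin m)), ∀ j ∈ (Finset.univ : Finset (Fin m)),
        i ≠ j → PPerp (e i) (e j) :=
      fun i _ j _ hij => (pisoPerp_iff _ _).mp (hpe i j hij)
    have hSPI : PI (∑ i, e i) := sum_PI he' hpe'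
    have hSiso : IsPIso (∑ i, e i) := (isPIso_iff _).mpr hSPI
    have hΦS : IsPIso (Φ (∑ i, e i)) := hbij.mapsTo hSiso
    have hf : ∀ i, IsPIso (Φ (e i)) := fun i => hbij.mapsTo (he i)
    have hf' : ∀ i ∈ (Finset.univ : Finset (Fin m)), PI (Φ (e i)) :=
      fun i _ => (isPIso_iff _).mp (hf i)
    have hfperp : ∀ i ∈ (Finset.univ : Finset (Fin m)), ∀ j ∈ (Finset.univ : Finset (Fin m)),
        i ≠ j → PPerp (Φ (e i)) (Φ (e j)) :=
      fun i _ j _ hij => (pisoPerp_iff _ _).mp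
        ((hperp _ _ (he i) (he j)).mp (hpe i j hij))
    have hle : ∀ i ∈ (Finset.univ : Finset (Fin m)), PLE (Φ (e i)) (Φ (∑ i, e i)) := by
      intro i _
      exact (pisoLE_iff _ _).mp ((horder _ _ (he i) hSiso).mp
        ((pisoLE_iff _ _).mpr (PLE_mem_sum he' hpe' (Finset.mem_univ i))))
    have hTPI : PI (∑ i, Φ (e i)) := sum_PI hf' hfperp
    have hT_le : PLE (∑ i, Φ (e i)) (Φ (∑ i, e i)) :=
      sum_PLE ((isPIso_iff _).mp hΦS) hf' hfperp hle
    obtain ⟨w, hwPI, hw⟩ := hbij.surjOn (show (∑ i, Φ (e i)) ∈ {v | IsPIso v} from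
      (isPIso_iff _).mpr hTPI)
    have hwPI' : IsPIso w := hwPI
    have hew : ∀ i ∈ (Finset.univ : Finset (Fin m)), PLE (e i) w := by
      intro i _
      apply (pisoLE_iff _ _).mp
      apply (horder _ _ (he i) hwPI').mpr
      apply (pisoLE_iff _ _).mpr
      rw [hw]
      exact PLE_mem_sum hf' hfperp (Finset.mem_univ i)
    have hSw : PLE (∑ i, e i) w := sum_PLE ((isPIso_iff _).mp hwPI') he' hpe' hew
    have hfinal : PLE (Φ (∑ i, e i)) (∑ i, Φ (e i)) := by
      have := (horder _ _ hSiso hwPI').mp ((pisoLE_iff _ _).mpr hSw)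
      rw [hw] at this
      exact (pisoLE_iff _ _).mp this
    exact PLE.antisymm' hfinal hT_le
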